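/- Let B be a valid hierarchical separator decomposition of graph G, and order vertices by post-order of tree nodes (all vertices in subtrees of the children of node i come before the vertices of B[i].nodes). Then for any two vertices u, v in tree nodes that are not in ancestor-descendant relation, there is no fill edge between u and v in the filled graph G⁺ under this ordering. -/
import Mathlib


/-- `Desc i j`: node `j` is a descendant of node `i` (or `j = i`) in the
binary tree where the children of node `k` are `2k+1` and `2k+2`. -/
inductive Desc : ℕ → ℕ → Prop
  | refl (i : ℕ) : Desc i i
  | left {i j : ℕ} : Desc i j → Desc i (2 * j + 1)
  | right {i j : ℕ} : Desc i j → Desc i (2 * j + 2)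

/-- `B` is a valid hierarchical separator decomposition for `G`: every edge of
`G` joins tree nodes of `B` that are equal or in ancestor-descendant relation. -/
def ValidDecomp {V : Type*} (G : SimpleGraph V) (B : ℕ → Set V) : Prop :=
  ∀ u v : V, G.Adj u v → ∀ i j : ℕ, u ∈ B i → v ∈ B j → Desc i j ∨ Desc j i

lemma desc_trans {i j k : ℕ} (h1 : Desc i j) (h2 : Desc j k) : Desc i k := by
  induction h2 with
  | refl => exact h1
  | left _ ih => exact Desc.left ih
  | right _ ih => exact Desc.right ih

lemma desc_inv {b m : ℕ} (h : Desc b m) :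
    b = m ∨ ∃ j, Desc b j ∧ (m = 2 * j + 1 ∨ m = 2 * j + 2) := by
  cases h with
  | refl => exact Or.inl rfl
  | left h => exact Or.inr ⟨_, h, Or.inl rfl⟩
  | right h => exact Or.inr ⟨_, h, Or.inr rfl⟩

lemma desc_chain {a b c : ℕ} (h1 : Desc a c) (h2 : Desc b c) :
    Desc a b ∨ Desc b a := by
  induction h1 with
  | refl => exact Or.inr h2
  | @left j h ih =>
    rcases desc_inv h2 with rfl | ⟨j', hbj', hj'⟩
    · exact Or.inl (Desc.left h)
    · have : j' = j := by omega
      subst this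
      exact ih hbj'
  | @right j h ih =>
    rcases desc_inv h2 with rfl | ⟨j', hbj', hj'⟩
    · exact Or.inl (Desc.right h)
    · have : j' = j := by omega
      subst this
      exact ih hbj'

lemma walk_cross {V : Type*} {G : SimpleGraph V} (P : V → Prop) :
    ∀ {a b : V} (p : G.Walk a b), P a → ¬ P b →
      ∃ x y, G.Adj x y ∧ P x ∧ ¬ P y ∧ y ∈ p.support := by
  intro a b p
  induction p with
  | nil => intro h nh; exact absurd h nh
  | @cons a c b h q ih =>
    intro ha hb
    by_cases hc : P c
    · obtain ⟨x, y, hxy, hx, hy, hmem⟩ := ih hc hb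
      exact ⟨x, y, hxy, hx, hy, by simp [SimpleGraph.Walk.support_cons, hmem]⟩
    · exact ⟨a, c, h, ha, hc, by simp [SimpleGraph.Walk.support_cons]⟩

/-- Let `B` be a valid hierarchical separator decomposition
of `G` (with pairwise-disjoint vertex sets covering `V`), and order the
vertices by post-order of tree nodes: all vertices lying in proper descendants
of a node `i` come before the vertices of `B i`.  Then for any two vertices
`u, v` lying in tree nodes that are not in ancestor-descendant relation, there
is no fill edge between `u` and `v` in the filled graph `G⁺` under this
ordering (no walk from `u` to `v` in `G` whose interior vertices are all
ordered strictly below both `u` and `v`). -/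
theorem stmt16 {V : Type*} [Fintype V] (G : SimpleGraph V) (B : ℕ → Set V)
    (hdisj : ∀ i j, i ≠ j → Disjoint (B i) (B j))
    (hcover : ∀ x : V, ∃ i : ℕ, x ∈ B i)
    (hvalid : ValidDecomp G B)
    (ord : V → ℕ) (hinj : Function.Injective ord)
    (hpost : ∀ i k : ℕ, Desc i k → k ≠ i →
      ∀ x ∈ B k, ∀ y ∈ B i, ord x < ord y)
    (u v : V) (i j : ℕ) (hu : u ∈ B i) (hv : v ∈ B j)
    (hij : ¬ Desc i j) (hji : ¬ Desc j i) :
    ¬ ∃ p : G.Walk u v, ∀ w ∈ p.support, w ≠ u → w ≠ v →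
      ord w < min (ord u) (ord v) := by
  rintro ⟨p, hp⟩
  -- assign each vertex its (unique) node
  set nd : V → ℕ := fun x => (hcover x).choose with hnddef
  have hnd : ∀ x, x ∈ B (nd x) := fun x => (hcover x).choose_spec
  have huniq : ∀ x k, x ∈ B k → nd x = k := by
    intro x k hk
    by_contra hne
    exact Set.disjoint_left.mp (hdisj _ _ hne) (hnd x) hk
  have hPu : Desc i (nd u) := by rw [huniq u i hu]; exact Desc.refl i
  have hPv : ¬ Desc i (nd v) := by rw [huniq v j hv]; exact hij
  obtain ⟨x, y, hxy, hx, hy, hmem⟩ := walk_cross (fun z => Desc i (nd z)) p hPu hPv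
  rcases hvalid x y hxy (nd x) (nd y) (hnd x) (hnd y) with h1 | h2
  · exact hy (desc_trans hx h1)
  · rcases desc_chain hx h2 with h3 | h3
    · exact hy h3
    · have hyi : nd y ≠ i := by
        intro h; apply hy; rw [h]; exact Desc.refl i
      have hord : ord u < ord y := hpost (nd y) i h3 hyi.symm u hu y (hnd y)
      have hyu : y ≠ u := by
        intro h; subst h; exact hyi (huniq y i hu)
      have hyv : y ≠ v := by
        intro h; subst h
        rw [huniq y j hv] at h3
        exact hji h3
      have := hp y hmem hyu hyv
      omega
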